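/- The translation of nested sequents to labelled sequents is inverted by the translation of labelled sequents to nested sequents: for every nested sequent Γ ⊢ Δ and every label x, n(ℓ(Γ ⊢ Δ; x); x) = Γ ⊢ Δ. -/

import Mathlib

/-- BiInt formulas -/
inductive Form : Type
  | atom : ℕ → Form
  | top  : Form
  | bot  : Form
  | and  : Form → Form → Form
  | or   : Form → Form → Form
  | imp  : Form → Form → Form
  | excl : Form → Form → Form
  deriving DecidableEq

/-- Kripke structures for BiInt -/
structure Kripke where
  W : Type
  le : W → W → Prop
  le_refl : ∀ w, le w w
  le_trans : ∀ u v w, le u v → le v w → le u w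
  nonempty : Nonempty W
  I : W → Set ℕ
  mono : ∀ {w w'}, le w w' → I w ⊆ I w'

/-- truth of a formula at a world -/
def Kripke.force (K : Kripke) : K.W → Form → Prop
  | w, .atom p => p ∈ K.I w
  | _, .top => True
  | _, .bot => False
  | w, .and A B => K.force w A ∧ K.force w B
  | w, .or A B => K.force w A ∨ K.force w B
  | w, .imp A B => ∀ w', K.le w w' → K.force w' A → K.force w' B
  | w, .excl A B => ∃ w', K.le w' w ∧ K.force w' A ∧ ¬ K.force w' B

/-- validity of a sequent -/
def SeqValid (Γ Δ : Multiset Form) : Prop :=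
  ∀ (K : Kripke) (w : K.W), (∀ A ∈ Γ, K.force w A) → ∃ A ∈ Δ, K.force w A

/-- The standard-style sequent calculus LBiI; the boolean parameter tells whether
the cut rule is allowed (`LD false` is cut-free LBiI). -/
inductive LD : Bool → Multiset Form → Multiset Form → Prop
  | hyp (b) (A : Form) (Γ Δ) : LD b (A ::ₘ Γ) (A ::ₘ Δ)
  | cut {Γ Δ} (A : Form) : LD true Γ (A ::ₘ Δ) → LD true (A ::ₘ Γ) Δ → LD true Γ Δ
  | weakL {b Γ Δ} (A : Form) : LD b Γ Δ → LD b (A ::ₘ Γ) Δ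
  | weakR {b Γ Δ} (A : Form) : LD b Γ Δ → LD b Γ (A ::ₘ Δ)
  | contrL {b Γ Δ} {A : Form} : LD b (A ::ₘ A ::ₘ Γ) Δ → LD b (A ::ₘ Γ) Δ
  | contrR {b Γ Δ} {A : Form} : LD b Γ (A ::ₘ A ::ₘ Δ) → LD b Γ (A ::ₘ Δ)
  | topL {b Γ Δ} : LD b Γ Δ → LD b (Form.top ::ₘ Γ) Δ
  | topR (b Γ Δ) : LD b Γ (Form.top ::ₘ Δ)
  | botL (b Γ Δ) : LD b (Form.bot ::ₘ Γ) Δ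
  | botR {b Γ Δ} : LD b Γ Δ → LD b Γ (Form.bot ::ₘ Δ)
  | andL {b Γ Δ A B} : LD b (A ::ₘ B ::ₘ Γ) Δ → LD b (Form.and A B ::ₘ Γ) Δ
  | andR {b Γ Δ A B} : LD b Γ (A ::ₘ Δ) → LD b Γ (B ::ₘ Δ) → LD b Γ (Form.and A B ::ₘ Δ)
  | orL {b Γ Δ A B} : LD b (A ::ₘ Γ) Δ → LD b (B ::ₘ Γ) Δ → LD b (Form.or A B ::ₘ Γ) Δ
  | orR {b Γ Δ A B} : LD b Γ (A ::ₘ B ::ₘ Δ) → LD b Γ (Form.or A B ::ₘ Δ)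
  | impL {b Γ Δ A B} : LD b (Form.imp A B ::ₘ Γ) (A ::ₘ Δ) → LD b (B ::ₘ Γ) Δ →
      LD b (Form.imp A B ::ₘ Γ) Δ
  | impR {b Γ Δ A B} : LD b (A ::ₘ Γ) {B} → LD b Γ (Form.imp A B ::ₘ Δ)
  | exclL {b Γ Δ A B} : LD b {A} (B ::ₘ Δ) → LD b (Form.excl A B ::ₘ Γ) Δ
  | exclR {b Γ Δ A B} : LD b Γ (A ::ₘ Δ) → LD b (B ::ₘ Γ) (Form.excl A B ::ₘ Δ) →
      LD b Γ (Form.excl A B ::ₘ Δ)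

/-- members of nested contexts: formulas or nested sequents -/
inductive NForm : Type
  | fm : Form → NForm
  | seq : List NForm → List NForm → NForm

mutual
  /-- deep equality of nested-context members up to permutation
  (nested contexts are multisets) -/
  inductive NEq : NForm → NForm → Prop
    | fm (A : Form) : NEq (.fm A) (.fm A)
    | seq {Γ Γ' Δ Δ'} : CEq Γ Γ' → CEq Δ Δ' → NEq (.seq Γ Δ) (.seq Γ' Δ')
  /-- equality of nested contexts as multisets -/
  inductive CEq : List NForm → List NForm → Prop
    | nil : CEq [] []
    | cons {a b Γ Γ'} : NEq a b → CEq Γ Γ' → CEq (a :: Γ) (b :: Γ')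
    | swap (a b : NForm) (Γ : List NForm) : CEq (a :: b :: Γ) (b :: a :: Γ)
    | trans {Γ Γ' Γ''} : CEq Γ Γ' → CEq Γ' Γ'' → CEq Γ Γ''
end

/-- The nested sequent calculus N-LBiI; the boolean parameter tells whether
the cut rule is allowed. Nested contexts are lists identified up to `CEq`
(i.e. multisets), so there is an explicit exchange rule. -/
inductive ND : Bool → List NForm → List NForm → Prop
  | exch {b Γ Γ' Δ Δ'} : CEq Γ Γ' → CEq Δ Δ' → ND b Γ Δ → ND b Γ' Δ'
  | hyp (b) (A : Form) (Γ Δ) : ND b (.fm A :: Γ) (.fm A :: Δ)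
  | cut {Γ Δ} (A : Form) : ND true Γ (.fm A :: Δ) → ND true (.fm A :: Γ) Δ → ND true Γ Δ
  | weakL {b Γ Δ} (A : Form) : ND b Γ Δ → ND b (.fm A :: Γ) Δ
  | weakR {b Γ Δ} (A : Form) : ND b Γ Δ → ND b Γ (.fm A :: Δ)
  | contrL {b Γ Δ} {A : Form} : ND b (.fm A :: .fm A :: Γ) Δ → ND b (.fm A :: Γ) Δ
  | contrR {b Γ Δ} {A : Form} : ND b Γ (.fm A :: .fm A :: Δ) → ND b Γ (.fm A :: Δ)
  | topL {b Γ Δ} : ND b Γ Δ → ND b (.fm .top :: Γ) Δ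
  | topR (b Γ Δ) : ND b Γ (.fm .top :: Δ)
  | botL (b Γ Δ) : ND b (.fm .bot :: Γ) Δ
  | botR {b Γ Δ} : ND b Γ Δ → ND b Γ (.fm .bot :: Δ)
  | andL {b Γ Δ A B} : ND b (.fm A :: .fm B :: Γ) Δ → ND b (.fm (.and A B) :: Γ) Δ
  | andR {b Γ Δ A B} : ND b Γ (.fm A :: Δ) → ND b Γ (.fm B :: Δ) → ND b Γ (.fm (.and A B) :: Δ)
  | orL {b Γ Δ A B} : ND b (.fm A :: Γ) Δ → ND b (.fm B :: Γ) Δ → ND b (.fm (.or A B) :: Γ) Δ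
  | orR {b Γ Δ A B} : ND b Γ (.fm A :: .fm B :: Δ) → ND b Γ (.fm (.or A B) :: Δ)
  | impL {b Γ Δ A B} : ND b (.fm (.imp A B) :: Γ) (.fm A :: Δ) → ND b (.fm B :: Γ) Δ →
      ND b (.fm (.imp A B) :: Γ) Δ
  | impR {b Γ Δ A B} : ND b (.fm A :: Γ) [.fm B] → ND b Γ (.fm (.imp A B) :: Δ)
  | exclL {b Γ Δ A B} : ND b [.fm A] (.fm B :: Δ) → ND b (.fm (.excl A B) :: Γ) Δ
  | exclR {b Γ Δ A B} : ND b Γ (.fm A :: Δ) → ND b (.fm B :: Γ) (.fm (.excl A B) :: Δ) →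
      ND b Γ (.fm (.excl A B) :: Δ)
  | nestL {b Γ Δ Γ₀ Δ₀} : ND b Γ₀ (Δ₀ ++ Δ) → ND b (.seq Γ₀ Δ₀ :: Γ) Δ
  | nestR {b Γ Δ Γ₀ Δ₀} : ND b (Γ ++ Γ₀) Δ₀ → ND b Γ (.seq Γ₀ Δ₀ :: Δ)
  | unnestL {b Γ Δ Γ₀ Δ₀} : ND b (.seq Γ₀ Δ₀ :: Γ) Δ → ND b (Γ₀ ++ Γ) (Δ₀ ++ Δ)
  | unnestR {b Γ Δ Γ₀ Δ₀} : ND b Γ (.seq Γ₀ Δ₀ :: Δ) → ND b (Γ₀ ++ Γ) (Δ₀ ++ Δ)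
/-- a finite directed graph with labels (nodes) drawn from ℕ -/
structure LGraph where
  nodes : Finset ℕ
  arcs : Finset (ℕ × ℕ)

/-- renaming of a node in a graph (`G[y/x]`) -/
def LGraph.ren (G : LGraph) (x y : ℕ) : LGraph :=
  ⟨G.nodes.image (fun z => if z = x then y else z),
   G.arcs.image (fun a => ((if a.1 = x then y else a.1), (if a.2 = x then y else a.2)))⟩

/-- labelled contexts: multisets of labelled formulas -/
abbrev LCtx := Multiset (ℕ × Form)

/-- renaming of a label in a labelled context (`Γ[y/x]`) -/
def renC (Γ : LCtx) (x y : ℕ) : LCtx := Γ.map (fun a => ((if a.1 = x then y else a.1), a.2))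

/-- wellformedness of a labelled sequent: all labels are nodes of the graph -/
def Wf (G : LGraph) (Γ Δ : LCtx) : Prop :=
  (∀ a ∈ Γ, a.1 ∈ G.nodes) ∧ (∀ a ∈ Δ, a.1 ∈ G.nodes)

/-- The labelled sequent calculus L-LBiI; the boolean parameter tells whether
the cut rule is allowed. -/
inductive LDeriv : Bool → LGraph → LCtx → LCtx → Prop
  | hyp {G Γ Δ} (b) (x : ℕ) (A : Form) : Wf G Γ Δ → x ∈ G.nodes →
      LDeriv b G ((x, A) ::ₘ Γ) ((x, A) ::ₘ Δ)
  | cut {G Γ Δ} (x : ℕ) (A : Form) : x ∈ G.nodes →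
      LDeriv true G Γ ((x, A) ::ₘ Δ) → LDeriv true G ((x, A) ::ₘ Γ) Δ → LDeriv true G Γ Δ
  | weakL {b G Γ Δ} (x : ℕ) (A : Form) : x ∈ G.nodes → LDeriv b G Γ Δ →
      LDeriv b G ((x, A) ::ₘ Γ) Δ
  | weakR {b G Γ Δ} (x : ℕ) (A : Form) : x ∈ G.nodes → LDeriv b G Γ Δ →
      LDeriv b G Γ ((x, A) ::ₘ Δ)
  | contrL {b G Γ Δ x A} : LDeriv b G ((x, A) ::ₘ (x, A) ::ₘ Γ) Δ → LDeriv b G ((x, A) ::ₘ Γ) Δ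
  | contrR {b G Γ Δ x A} : LDeriv b G Γ ((x, A) ::ₘ (x, A) ::ₘ Δ) → LDeriv b G Γ ((x, A) ::ₘ Δ)
  /-- `nodesplit U`: the conclusion graph is `G₀ ⋈y (y,x) ⋈x G`,
  the premise graph is `G₀ ⋈y G[y/x]`, with proviso `↓G x` -/
  | nodesplitU {b Γ Δ} (G₀ G : LGraph) (x y : ℕ) :
      y ∈ G₀.nodes → x ∈ G.nodes → G₀.nodes ∩ G.nodes = ∅ →
      (∀ z, (z, x) ∉ G.arcs) →
      LDeriv b ⟨G₀.nodes ∪ (G.ren x y).nodes, G₀.arcs ∪ (G.ren x y).arcs⟩ Γ Δ →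
      LDeriv b ⟨G₀.nodes ∪ G.nodes, insert (y, x) (G₀.arcs ∪ G.arcs)⟩ Γ Δ
  /-- `nodesplit D`: the conclusion graph is `G ⋈x (x,y) ⋈y G₀`,
  the premise graph is `G[y/x] ⋈y G₀`, with proviso `↑G x` -/
  | nodesplitD {b Γ Δ} (G G₀ : LGraph) (x y : ℕ) :
      x ∈ G.nodes → y ∈ G₀.nodes → G.nodes ∩ G₀.nodes = ∅ →
      (∀ z, (x, z) ∉ G.arcs) →
      LDeriv b ⟨(G.ren x y).nodes ∪ G₀.nodes, (G.ren x y).arcs ∪ G₀.arcs⟩ Γ Δ →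
      LDeriv b ⟨G.nodes ∪ G₀.nodes, insert (x, y) (G.arcs ∪ G₀.arcs)⟩ Γ Δ
  /-- `nodemerge D`: the premise graph is `G₀ ⋈y (y,x) ⋈x G`,
  the conclusion graph is `G₀[x/y] ⋈x G` and `y` is renamed to `x` in the contexts -/
  | nodemergeD {b Γ Δ} (G₀ G : LGraph) (x y : ℕ) :
      y ∈ G₀.nodes → x ∈ G.nodes → G₀.nodes ∩ G.nodes = ∅ →
      LDeriv b ⟨G₀.nodes ∪ G.nodes, insert (y, x) (G₀.arcs ∪ G.arcs)⟩ Γ Δ →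
      LDeriv b ⟨(G₀.ren y x).nodes ∪ G.nodes, (G₀.ren y x).arcs ∪ G.arcs⟩
        (renC Γ y x) (renC Δ y x)
  /-- `nodemerge U`: the premise graph is `G ⋈x (x,y) ⋈y G₀`,
  the conclusion graph is `G ⋈x G₀[x/y]` and `y` is renamed to `x` in the contexts -/
  | nodemergeU {b Γ Δ} (G G₀ : LGraph) (x y : ℕ) :
      x ∈ G.nodes → y ∈ G₀.nodes → G.nodes ∩ G₀.nodes = ∅ →
      LDeriv b ⟨G.nodes ∪ G₀.nodes, insert (x, y) (G.arcs ∪ G₀.arcs)⟩ Γ Δ →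
      LDeriv b ⟨G.nodes ∪ (G₀.ren y x).nodes, G.arcs ∪ (G₀.ren y x).arcs⟩
        (renC Γ y x) (renC Δ y x)
  | monotL {b G Γ Δ A} (x y : ℕ) : (x, y) ∈ G.arcs →
      LDeriv b G ((x, A) ::ₘ (y, A) ::ₘ Γ) Δ → LDeriv b G ((x, A) ::ₘ Γ) Δ
  | monotR {b G Γ Δ A} (x y : ℕ) : (y, x) ∈ G.arcs →
      LDeriv b G Γ ((y, A) ::ₘ (x, A) ::ₘ Δ) → LDeriv b G Γ ((x, A) ::ₘ Δ)
  | topL {b G Γ Δ x} : x ∈ G.nodes → LDeriv b G Γ Δ → LDeriv b G ((x, Form.top) ::ₘ Γ) Δ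
  | topR {G Γ Δ} (b) (x : ℕ) : Wf G Γ Δ → x ∈ G.nodes → LDeriv b G Γ ((x, Form.top) ::ₘ Δ)
  | botL {G Γ Δ} (b) (x : ℕ) : Wf G Γ Δ → x ∈ G.nodes → LDeriv b G ((x, Form.bot) ::ₘ Γ) Δ
  | botR {b G Γ Δ x} : x ∈ G.nodes → LDeriv b G Γ Δ → LDeriv b G Γ ((x, Form.bot) ::ₘ Δ)
  | andL {b G Γ Δ x A B} : LDeriv b G ((x, A) ::ₘ (x, B) ::ₘ Γ) Δ →
      LDeriv b G ((x, Form.and A B) ::ₘ Γ) Δ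
  | andR {b G Γ Δ x A B} : LDeriv b G Γ ((x, A) ::ₘ Δ) → LDeriv b G Γ ((x, B) ::ₘ Δ) →
      LDeriv b G Γ ((x, Form.and A B) ::ₘ Δ)
  | orL {b G Γ Δ x A B} : LDeriv b G ((x, A) ::ₘ Γ) Δ → LDeriv b G ((x, B) ::ₘ Γ) Δ →
      LDeriv b G ((x, Form.or A B) ::ₘ Γ) Δ
  | orR {b G Γ Δ x A B} : LDeriv b G Γ ((x, A) ::ₘ (x, B) ::ₘ Δ) →
      LDeriv b G Γ ((x, Form.or A B) ::ₘ Δ)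
  | impL {b G Γ Δ x A B} : LDeriv b G ((x, Form.imp A B) ::ₘ Γ) ((x, A) ::ₘ Δ) →
      LDeriv b G ((x, B) ::ₘ Γ) Δ → LDeriv b G ((x, Form.imp A B) ::ₘ Γ) Δ
  /-- `⊃R`: the premise graph is `G ⋈x (x,y)` with `y` fresh -/
  | impR {b G Γ Δ A B} (x y : ℕ) : x ∈ G.nodes → y ∉ G.nodes →
      LDeriv b ⟨insert y G.nodes, insert (x, y) G.arcs⟩ ((y, A) ::ₘ Γ) ((y, B) ::ₘ Δ) →
      LDeriv b G Γ ((x, Form.imp A B) ::ₘ Δ)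
  /-- `⤙L`: the premise graph is `(y,x) ⋈x G` with `y` fresh -/
  | exclL {b G Γ Δ A B} (x y : ℕ) : x ∈ G.nodes → y ∉ G.nodes →
      LDeriv b ⟨insert y G.nodes, insert (y, x) G.arcs⟩ ((y, A) ::ₘ Γ) ((y, B) ::ₘ Δ) →
      LDeriv b G ((x, Form.excl A B) ::ₘ Γ) Δ
  | exclR {b G Γ Δ x A B} : LDeriv b G Γ ((x, A) ::ₘ Δ) →
      LDeriv b G ((x, B) ::ₘ Γ) ((x, Form.excl A B) ::ₘ Δ) →
      LDeriv b G Γ ((x, Form.excl A B) ::ₘ Δ)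
/-- adjacency: the symmetric closure of the arc relation -/
def LGraph.Adj (G : LGraph) (a b : ℕ) : Prop := (a, b) ∈ G.arcs ∨ (b, a) ∈ G.arcs

/-- `l` is a (simple, undirected) path from `x` to `y` in `G` -/
def IsPath (G : LGraph) (x y : ℕ) (l : List ℕ) : Prop :=
  l.Chain' G.Adj ∧ l.head? = some x ∧ l.getLast? = some y ∧ l.Nodup ∧ ∀ z ∈ l, z ∈ G.nodes

/-- `G` is a label tree: finite, nonempty and any two nodes are connected
by a unique path of forward and backward arcs -/
structure IsTree (G : LGraph) : Prop where
  nonempty : G.nodes.Nonempty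
  arcs_mem : ∀ a ∈ G.arcs, a.1 ∈ G.nodes ∧ a.2 ∈ G.nodes
  no_loop : ∀ x, (x, x) ∉ G.arcs
  no_double : ∀ x y, (x, y) ∈ G.arcs → (y, x) ∉ G.arcs
  unique_path : ∀ x ∈ G.nodes, ∀ y ∈ G.nodes, ∃! l : List ℕ, IsPath G x y l

/-- reachability in `G` avoiding the node `x` -/
def LGraph.ReachAvoiding (G : LGraph) (x : ℕ) : ℕ → ℕ → Prop :=
  Relation.ReflTransGen (fun a b => G.Adj a b ∧ a ≠ x ∧ b ≠ x)

/-- the nodes of the component of `y` in `G` after removing the node `x` -/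
noncomputable def LGraph.comp (G : LGraph) (x y : ℕ) : Finset ℕ :=
  letI : DecidablePred (G.ReachAvoiding x y) := Classical.decPred _
  (G.nodes.erase x).filter (G.ReachAvoiding x y)

/-- the subgraph induced by a set of nodes -/
def LGraph.induce (G : LGraph) (s : Finset ℕ) : LGraph :=
  ⟨s, G.arcs.filter (fun a => a.1 ∈ s ∧ a.2 ∈ s)⟩

lemma LGraph.comp_subset (G : LGraph) (x y : ℕ) : G.comp x y ⊆ G.nodes.erase x := by
  intro z hz
  unfold LGraph.comp at hz
  letI : DecidablePred (G.ReachAvoiding x y) := Classical.decPred _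
  exact Finset.mem_of_mem_filter z hz

lemma LGraph.comp_card_lt (G : LGraph) {x : ℕ} (hx : x ∈ G.nodes) (y : ℕ) :
    (G.comp x y).card < G.nodes.card :=
  lt_of_le_of_lt (Finset.card_le_card (G.comp_subset x y)) (Finset.card_erase_lt_of_mem hx)

/-- the translation `n(Γ ⊢_G Δ ; x)` of a labelled sequent into a nested sequent,
given as the pair (antecedent, succedent) of nested contexts: formulas labelled `x`
stay at top level, and each neighbouring component gives rise to a nested sequent
member, in the antecedent for in-neighbours and in the succedent for out-neighbours -/
noncomputable def ntr (G : LGraph) (Γ Δ : LCtx) (x : ℕ) : List NForm × List NForm :=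
  if hx : x ∈ G.nodes then
    let ants : List NForm := (Γ.filter (fun a => a.1 = x)).toList.map (fun a => NForm.fm a.2)
    let sucs : List NForm := (Δ.filter (fun a => a.1 = x)).toList.map (fun a => NForm.fm a.2)
    let nestedIn : List NForm :=
      (G.arcs.filter (fun a => a.2 = x)).toList.attach.map (fun a =>
        let s := G.comp x a.1.1
        let r := ntr (G.induce s) (Γ.filter (fun p => p.1 ∈ s)) (Δ.filter (fun p => p.1 ∈ s)) a.1.1
        NForm.seq r.1 r.2)
    let nestedOut : List NForm :=
      (G.arcs.filter (fun a => a.1 = x)).toList.attach.map (fun a =>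
        let s := G.comp x a.1.2
        let r := ntr (G.induce s) (Γ.filter (fun p => p.1 ∈ s)) (Δ.filter (fun p => p.1 ∈ s)) a.1.2
        NForm.seq r.1 r.2)
    (ants ++ nestedIn, sucs ++ nestedOut)
  else ([], [])
termination_by G.nodes.card
decreasing_by
  all_goals
    simpa [LGraph.induce] using G.comp_card_lt hx _
/-- `LabOf Γ Δ x G Λ Θ` holds iff the labelled sequent `Λ ⊢_G Θ` is (a representative,
up to the choice of fresh labels, of) the translation `ℓ(Γ ⊢ Δ ; x)` of the nested
sequent `Γ ⊢ Δ` rooted at the label `x`. -/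
inductive LabOf : List NForm → List NForm → ℕ → LGraph → LCtx → LCtx → Prop
  | nil (x : ℕ) : LabOf [] [] x ⟨{x}, ∅⟩ 0 0
  | antFm {Γ Δ x G Λ Θ} (A : Form) : LabOf Γ Δ x G Λ Θ →
      LabOf (.fm A :: Γ) Δ x G ((x, A) ::ₘ Λ) Θ
  | sucFm {Γ Δ x G Λ Θ} (A : Form) : LabOf Γ Δ x G Λ Θ →
      LabOf Γ (.fm A :: Δ) x G Λ ((x, A) ::ₘ Θ)
  /-- a nested sequent member of the antecedent creates a fresh node `y`
  with an arc `(y,x)` -/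
  | antSeq {Γ Δ x G Λ Θ Γ₀ Δ₀ y G₀ Λ₀ Θ₀} : LabOf Γ Δ x G Λ Θ → LabOf Γ₀ Δ₀ y G₀ Λ₀ Θ₀ →
      G.nodes ∩ G₀.nodes = ∅ →
      LabOf (.seq Γ₀ Δ₀ :: Γ) Δ x
        ⟨G.nodes ∪ G₀.nodes, insert (y, x) (G.arcs ∪ G₀.arcs)⟩ (Λ + Λ₀) (Θ + Θ₀)
  /-- a nested sequent member of the succedent creates a fresh node `y`
  with an arc `(x,y)` -/
  | sucSeq {Γ Δ x G Λ Θ Γ₀ Δ₀ y G₀ Λ₀ Θ₀} : LabOf Γ Δ x G Λ Θ → LabOf Γ₀ Δ₀ y G₀ Λ₀ Θ₀ →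
      G.nodes ∩ G₀.nodes = ∅ →
      LabOf Γ (.seq Γ₀ Δ₀ :: Δ) x
        ⟨G.nodes ∪ G₀.nodes, insert (x, y) (G.arcs ∪ G₀.arcs)⟩ (Λ + Λ₀) (Θ + Θ₀)


/-! ### Auxiliary development -/

mutual
theorem NEq.refl' : ∀ a : NForm, NEq a a
  | .fm A => .fm A
  | .seq Γ Δ => .seq (CEq.refl' Γ) (CEq.refl' Δ)
theorem CEq.refl' : ∀ l : List NForm, CEq l l
  | [] => .nil
  | a :: l => .cons (NEq.refl' a) (CEq.refl' l)
end

theorem rtg_mono {α : Type*} {r p : α → α → Prop} {a b : α}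
    (h : Relation.ReflTransGen r a b) (H : ∀ a b, r a b → p a b) : Relation.ReflTransGen p a b :=
  by
  induction h with
  | refl => exact .refl
  | tail _ hs ih => exact ih.tail (H _ _ hs)

theorem CEq.of_perm {l l' : List NForm} (h : l.Perm l') : CEq l l' := by
  induction h with
  | nil => exact .nil
  | cons a _ ih => exact .cons (NEq.refl' a) ih
  | swap a b l => exact .swap b a l
  | trans _ _ ih1 ih2 => exact .trans ih1 ih2

theorem LGraph.ext' {G H : LGraph} (h1 : G.nodes = H.nodes) (h2 : G.arcs = H.arcs) : G = H := by
  cases G; cases H; simp_all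

theorem toList_perm {α : Type*} {s : Multiset α} {l : List α} (h : s = ↑l) : s.toList.Perm l := by
  rw [← Multiset.coe_eq_coe, Multiset.coe_toList, h]

theorem toList_cons_perm {α : Type*} (a : α) (s : Multiset α) :
    ((a ::ₘ s).toList).Perm (a :: s.toList) :=
  toList_perm (by rw [← Multiset.cons_coe, Multiset.coe_toList])

theorem LGraph.mem_comp {G : LGraph} {x y b : ℕ} :
    b ∈ G.comp x y ↔ b ∈ G.nodes.erase x ∧ G.ReachAvoiding x y b := by
  unfold LGraph.comp
  classical
  rw [Finset.mem_filter]

theorem LGraph.not_mem_comp (G : LGraph) (x y : ℕ) : x ∉ G.comp x y := fun h =>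
  Finset.notMem_erase x G.nodes (G.comp_subset x y h)

theorem LGraph.Adj.mono {G H : LGraph} (hs : G.arcs ⊆ H.arcs) {a b : ℕ} (h : G.Adj a b) :
    H.Adj a b :=
  h.imp (fun h => hs h) (fun h => hs h)

/-- the two components of `ntr`, with the `attach` eliminated -/
noncomputable def ntrIn (G : LGraph) (Γ Δ : LCtx) (x : ℕ) (a : ℕ × ℕ) : NForm :=
  NForm.seq
    (ntr (G.induce (G.comp x a.1)) (Γ.filter (fun p => p.1 ∈ G.comp x a.1))
      (Δ.filter (fun p => p.1 ∈ G.comp x a.1)) a.1).1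
    (ntr (G.induce (G.comp x a.1)) (Γ.filter (fun p => p.1 ∈ G.comp x a.1))
      (Δ.filter (fun p => p.1 ∈ G.comp x a.1)) a.1).2

noncomputable def ntrOut (G : LGraph) (Γ Δ : LCtx) (x : ℕ) (a : ℕ × ℕ) : NForm :=
  NForm.seq
    (ntr (G.induce (G.comp x a.2)) (Γ.filter (fun p => p.1 ∈ G.comp x a.2))
      (Δ.filter (fun p => p.1 ∈ G.comp x a.2)) a.2).1
    (ntr (G.induce (G.comp x a.2)) (Γ.filter (fun p => p.1 ∈ G.comp x a.2))
      (Δ.filter (fun p => p.1 ∈ G.comp x a.2)) a.2).2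

theorem ntr_eq {G : LGraph} {Γ Δ : LCtx} {x : ℕ} (hx : x ∈ G.nodes) :
    ntr G Γ Δ x =
      ((Multiset.filter (fun a => a.1 = x) Γ).toList.map (fun a => NForm.fm a.2) ++
        ((G.arcs.filter (fun a => a.2 = x)).toList.map (ntrIn G Γ Δ x)),
       (Multiset.filter (fun a => a.1 = x) Δ).toList.map (fun a => NForm.fm a.2) ++
        ((G.arcs.filter (fun a => a.1 = x)).toList.map (ntrOut G Γ Δ x))) := by
  have h1 : ∀ (l : List (ℕ × ℕ)) (f : ℕ × ℕ → NForm) (g : {a // a ∈ l} → NForm),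
      (∀ a, g a = f a.1) → l.attach.map g = l.map f := by
    intro l f g hg
    rw [funext hg]
    exact List.attach_map_val
  rw [ntr.eq_def, dif_pos hx]
  dsimp only
  rw [← h1 _ (ntrIn G Γ Δ x) (fun a => ntrIn G Γ Δ x a.1) (fun a => rfl),
      ← h1 _ (ntrOut G Γ Δ x) (fun a => ntrOut G Γ Δ x a.1) (fun a => rfl)]
  rfl

theorem filter_comp_cons {Λ : LCtx} {x : ℕ} (A : Form) (s : Finset ℕ) (hs : x ∉ s) :
    Multiset.filter (fun p => p.1 ∈ s) ((x, A) ::ₘ Λ) = Multiset.filter (fun p => p.1 ∈ s) Λ := by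
  rw [Multiset.filter_cons, if_neg hs, zero_add]

theorem ntrIn_consL (G : LGraph) (Λ Θ : LCtx) (x : ℕ) (A : Form) :
    ntrIn G ((x, A) ::ₘ Λ) Θ x = ntrIn G Λ Θ x := by
  funext a
  unfold ntrIn
  rw [filter_comp_cons A _ (G.not_mem_comp x a.1)]

theorem ntrIn_consR (G : LGraph) (Λ Θ : LCtx) (x : ℕ) (A : Form) :
    ntrIn G Λ ((x, A) ::ₘ Θ) x = ntrIn G Λ Θ x := by
  funext a
  unfold ntrIn
  rw [filter_comp_cons A _ (G.not_mem_comp x a.1)]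

theorem ntrOut_consL (G : LGraph) (Λ Θ : LCtx) (x : ℕ) (A : Form) :
    ntrOut G ((x, A) ::ₘ Λ) Θ x = ntrOut G Λ Θ x := by
  funext a
  unfold ntrOut
  rw [filter_comp_cons A _ (G.not_mem_comp x a.2)]

theorem ntrOut_consR (G : LGraph) (Λ Θ : LCtx) (x : ℕ) (A : Form) :
    ntrOut G Λ ((x, A) ::ₘ Θ) x = ntrOut G Λ Θ x := by
  funext a
  unfold ntrOut
  rw [filter_comp_cons A _ (G.not_mem_comp x a.2)]

theorem filter_fst_cons (Λ : LCtx) (x : ℕ) (A : Form) :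
    Multiset.filter (fun a => a.1 = x) ((x, A) ::ₘ Λ) =
      (x, A) ::ₘ Multiset.filter (fun a => a.1 = x) Λ := by
  rw [Multiset.filter_cons, if_pos rfl]
  rfl

/-- the invariants maintained by `LabOf` -/
structure LInv (G : LGraph) (x : ℕ) (Λ Θ : LCtx) : Prop where
  root : x ∈ G.nodes
  lab₁ : ∀ a ∈ Λ, a.1 ∈ G.nodes
  lab₂ : ∀ a ∈ Θ, a.1 ∈ G.nodes
  arcs_mem : ∀ a ∈ G.arcs, a.1 ∈ G.nodes ∧ a.2 ∈ G.nodes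
  no_loop : ∀ z, (z, z) ∉ G.arcs
  conn : ∀ z ∈ G.nodes,
    Relation.ReflTransGen (fun a b => G.Adj a b ∧ a ∈ G.nodes ∧ b ∈ G.nodes) x z

theorem labOf_inv {Γ Δ : List NForm} {x : ℕ} {G : LGraph} {Λ Θ : LCtx}
    (h : LabOf Γ Δ x G Λ Θ) : LInv G x Λ Θ := by
  induction h with
  | nil z =>
    refine ⟨by simp, by simp, by simp, by simp, by simp, ?_⟩
    intro w hw
    simp only [Finset.mem_singleton] at hw
    subst hw
    exact .refl
  | antFm A h ih =>
    refine ⟨ih.root, ?_, ih.lab₂, ih.arcs_mem, ih.no_loop, ih.conn⟩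
    intro a ha
    rcases Multiset.mem_cons.1 ha with rfl | ha
    · exact ih.root
    · exact ih.lab₁ a ha
  | sucFm A h ih =>
    refine ⟨ih.root, ih.lab₁, ?_, ih.arcs_mem, ih.no_loop, ih.conn⟩
    intro a ha
    rcases Multiset.mem_cons.1 ha with rfl | ha
    · exact ih.root
    · exact ih.lab₂ a ha
  | @antSeq Γ Δ x G Λ Θ Γ₀ Δ₀ y G₀ Λ₀ Θ₀ h h₀ hdisj ih ih₀ =>
    have hd : ∀ z, z ∈ G.nodes → z ∈ G₀.nodes → False := fun z h1 h2 => by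
      have := Finset.mem_inter.2 ⟨h1, h2⟩
      rw [hdisj] at this
      exact absurd this (Finset.notMem_empty z)
    have hsubG : G.arcs ⊆ insert (y, x) (G.arcs ∪ G₀.arcs) := fun a ha =>
      Finset.mem_insert_of_mem (Finset.mem_union_left _ ha)
    have hsubG₀ : G₀.arcs ⊆ insert (y, x) (G.arcs ∪ G₀.arcs) := fun a ha =>
      Finset.mem_insert_of_mem (Finset.mem_union_right _ ha)
    refine ⟨Finset.mem_union_left _ ih.root, ?_, ?_, ?_, ?_, ?_⟩
    · intro a ha
      rcases Multiset.mem_add.1 ha with ha | ha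
      · exact Finset.mem_union_left _ (ih.lab₁ a ha)
      · exact Finset.mem_union_right _ (ih₀.lab₁ a ha)
    · intro a ha
      rcases Multiset.mem_add.1 ha with ha | ha
      · exact Finset.mem_union_left _ (ih.lab₂ a ha)
      · exact Finset.mem_union_right _ (ih₀.lab₂ a ha)
    · intro a ha
      rcases Finset.mem_insert.1 ha with rfl | ha
      · exact ⟨Finset.mem_union_right _ ih₀.root, Finset.mem_union_left _ ih.root⟩
      rcases Finset.mem_union.1 ha with ha | ha
      · exact ⟨Finset.mem_union_left _ (ih.arcs_mem a ha).1,
          Finset.mem_union_left _ (ih.arcs_mem a ha).2⟩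
      · exact ⟨Finset.mem_union_right _ (ih₀.arcs_mem a ha).1,
          Finset.mem_union_right _ (ih₀.arcs_mem a ha).2⟩
    · intro z hz
      rcases Finset.mem_insert.1 hz with hz | hz
      · obtain ⟨h1, h2⟩ := Prod.mk.injEq .. ▸ hz
        exact hd z (h2 ▸ ih.root) (h1 ▸ ih₀.root)
      rcases Finset.mem_union.1 hz with hz | hz
      · exact ih.no_loop z hz
      · exact ih₀.no_loop z hz
    · intro z hz
      rcases Finset.mem_union.1 hz with hz | hz
      · exact rtg_mono (ih.conn z hz) (fun a b hab =>
          ⟨hab.1.mono hsubG, Finset.mem_union_left _ hab.2.1, Finset.mem_union_left _ hab.2.2⟩)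
      · refine Relation.ReflTransGen.trans (Relation.ReflTransGen.single
          ⟨Or.inr (Finset.mem_insert_self _ _), Finset.mem_union_left _ ih.root,
           Finset.mem_union_right _ ih₀.root⟩) ?_
        exact rtg_mono (ih₀.conn z hz) (fun a b hab =>
          ⟨hab.1.mono hsubG₀, Finset.mem_union_right _ hab.2.1,
           Finset.mem_union_right _ hab.2.2⟩)
  | @sucSeq Γ Δ x G Λ Θ Γ₀ Δ₀ y G₀ Λ₀ Θ₀ h h₀ hdisj ih ih₀ =>
    have hd : ∀ z, z ∈ G.nodes → z ∈ G₀.nodes → False := fun z h1 h2 => by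
      have := Finset.mem_inter.2 ⟨h1, h2⟩
      rw [hdisj] at this
      exact absurd this (Finset.notMem_empty z)
    have hsubG : G.arcs ⊆ insert (x, y) (G.arcs ∪ G₀.arcs) := fun a ha =>
      Finset.mem_insert_of_mem (Finset.mem_union_left _ ha)
    have hsubG₀ : G₀.arcs ⊆ insert (x, y) (G.arcs ∪ G₀.arcs) := fun a ha =>
      Finset.mem_insert_of_mem (Finset.mem_union_right _ ha)
    refine ⟨Finset.mem_union_left _ ih.root, ?_, ?_, ?_, ?_, ?_⟩
    · intro a ha
      rcases Multiset.mem_add.1 ha with ha | ha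
      · exact Finset.mem_union_left _ (ih.lab₁ a ha)
      · exact Finset.mem_union_right _ (ih₀.lab₁ a ha)
    · intro a ha
      rcases Multiset.mem_add.1 ha with ha | ha
      · exact Finset.mem_union_left _ (ih.lab₂ a ha)
      · exact Finset.mem_union_right _ (ih₀.lab₂ a ha)
    · intro a ha
      rcases Finset.mem_insert.1 ha with rfl | ha
      · exact ⟨Finset.mem_union_left _ ih.root, Finset.mem_union_right _ ih₀.root⟩
      rcases Finset.mem_union.1 ha with ha | ha
      · exact ⟨Finset.mem_union_left _ (ih.arcs_mem a ha).1,
          Finset.mem_union_left _ (ih.arcs_mem a ha).2⟩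
      · exact ⟨Finset.mem_union_right _ (ih₀.arcs_mem a ha).1,
          Finset.mem_union_right _ (ih₀.arcs_mem a ha).2⟩
    · intro z hz
      rcases Finset.mem_insert.1 hz with hz | hz
      · obtain ⟨h1, h2⟩ := Prod.mk.injEq .. ▸ hz
        exact hd z (h1 ▸ ih.root) (h2 ▸ ih₀.root)
      rcases Finset.mem_union.1 hz with hz | hz
      · exact ih.no_loop z hz
      · exact ih₀.no_loop z hz
    · intro z hz
      rcases Finset.mem_union.1 hz with hz | hz
      · exact rtg_mono (ih.conn z hz) (fun a b hab =>
          ⟨hab.1.mono hsubG, Finset.mem_union_left _ hab.2.1, Finset.mem_union_left _ hab.2.2⟩)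
      · refine Relation.ReflTransGen.trans (Relation.ReflTransGen.single
          ⟨Or.inl (Finset.mem_insert_self _ _), Finset.mem_union_left _ ih.root,
           Finset.mem_union_right _ ih₀.root⟩) ?_
        exact rtg_mono (ih₀.conn z hz) (fun a b hab =>
          ⟨hab.1.mono hsubG₀, Finset.mem_union_right _ hab.2.1,
           Finset.mem_union_right _ hab.2.2⟩)

section Glue

variable {G G₀ : LGraph} {x y : ℕ} {e : ℕ × ℕ}

theorem reach_glue_G (hd : ∀ z, z ∈ G.nodes → z ∈ G₀.nodes → False)
    (hGa : ∀ a ∈ G.arcs, a.1 ∈ G.nodes ∧ a.2 ∈ G.nodes)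
    (hG₀a : ∀ a ∈ G₀.arcs, a.1 ∈ G₀.nodes ∧ a.2 ∈ G₀.nodes)
    (he : e = (y, x) ∨ e = (x, y)) {z b : ℕ} (hz : z ∈ G.nodes)
    (h : LGraph.ReachAvoiding ⟨G.nodes ∪ G₀.nodes, insert e (G.arcs ∪ G₀.arcs)⟩ x z b) :
    b ∈ G.nodes ∧ G.ReachAvoiding x z b := by
  induction h with
  | refl => exact ⟨hz, .refl⟩
  | @tail m c hr step ih =>
    obtain ⟨ihb, ihr⟩ := ih
    obtain ⟨hadj, hne1, hne2⟩ := step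
    rcases hadj with hm | hm <;> rcases Finset.mem_insert.1 hm with hm | hm
    · rcases he with rfl | rfl
      · exact absurd (congrArg Prod.snd hm) hne2
      · exact absurd (congrArg Prod.fst hm) hne1
    · rcases Finset.mem_union.1 hm with hm | hm
      · exact ⟨(hGa _ hm).2, ihr.tail ⟨Or.inl hm, hne1, hne2⟩⟩
      · exact absurd ihb (fun hb => hd _ hb (hG₀a _ hm).1)
    · rcases he with rfl | rfl
      · exact absurd (congrArg Prod.snd hm) hne1
      · exact absurd (congrArg Prod.fst hm) hne2
    · rcases Finset.mem_union.1 hm with hm | hm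
      · exact ⟨(hGa _ hm).1, ihr.tail ⟨Or.inr hm, hne1, hne2⟩⟩
      · exact absurd ihb (fun hb => hd _ hb (hG₀a _ hm).2)

theorem reach_glue_G₀ (hd : ∀ z, z ∈ G.nodes → z ∈ G₀.nodes → False)
    (hGa : ∀ a ∈ G.arcs, a.1 ∈ G.nodes ∧ a.2 ∈ G.nodes)
    (hG₀a : ∀ a ∈ G₀.arcs, a.1 ∈ G₀.nodes ∧ a.2 ∈ G₀.nodes)
    (he : e = (y, x) ∨ e = (x, y)) {z b : ℕ} (hz : z ∈ G₀.nodes)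
    (h : LGraph.ReachAvoiding ⟨G.nodes ∪ G₀.nodes, insert e (G.arcs ∪ G₀.arcs)⟩ x z b) :
    b ∈ G₀.nodes := by
  induction h with
  | refl => exact hz
  | @tail m c hr step ih =>
    obtain ⟨hadj, hne1, hne2⟩ := step
    rcases hadj with hm | hm <;> rcases Finset.mem_insert.1 hm with hm | hm
    · rcases he with rfl | rfl
      · exact absurd (congrArg Prod.snd hm) hne2
      · exact absurd (congrArg Prod.fst hm) hne1
    · rcases Finset.mem_union.1 hm with hm | hm
      · exact absurd ih (fun hb => hd _ (hGa _ hm).1 hb)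
      · exact (hG₀a _ hm).2
    · rcases he with rfl | rfl
      · exact absurd (congrArg Prod.snd hm) hne1
      · exact absurd (congrArg Prod.fst hm) hne2
    · rcases Finset.mem_union.1 hm with hm | hm
      · exact absurd ih (fun hb => hd _ (hGa _ hm).2 hb)
      · exact (hG₀a _ hm).1

theorem comp_glue_new (hd : ∀ z, z ∈ G.nodes → z ∈ G₀.nodes → False)
    (hGa : ∀ a ∈ G.arcs, a.1 ∈ G.nodes ∧ a.2 ∈ G.nodes)
    (hG₀a : ∀ a ∈ G₀.arcs, a.1 ∈ G₀.nodes ∧ a.2 ∈ G₀.nodes)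
    (he : e = (y, x) ∨ e = (x, y)) (hxG : x ∈ G.nodes) (hyG₀ : y ∈ G₀.nodes)
    (conn₀ : ∀ z ∈ G₀.nodes,
      Relation.ReflTransGen (fun a b => G₀.Adj a b ∧ a ∈ G₀.nodes ∧ b ∈ G₀.nodes) y z) :
    LGraph.comp ⟨G.nodes ∪ G₀.nodes, insert e (G.arcs ∪ G₀.arcs)⟩ x y = G₀.nodes := by
  ext b
  rw [LGraph.mem_comp]
  constructor
  · rintro ⟨-, hr⟩
    exact reach_glue_G₀ hd hGa hG₀a he hyG₀ hr
  · intro hb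
    refine ⟨Finset.mem_erase.2 ⟨fun hbx => hd x hxG (hbx ▸ hb), Finset.mem_union_right _ hb⟩, ?_⟩
    exact rtg_mono (conn₀ b hb) (fun a c hac =>
      ⟨hac.1.mono (fun p hp => Finset.mem_insert_of_mem (Finset.mem_union_right _ hp)),
       fun hax => hd x hxG (hax ▸ hac.2.1), fun hcx => hd x hxG (hcx ▸ hac.2.2)⟩)

theorem comp_glue_old (hd : ∀ z, z ∈ G.nodes → z ∈ G₀.nodes → False)
    (hGa : ∀ a ∈ G.arcs, a.1 ∈ G.nodes ∧ a.2 ∈ G.nodes)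
    (hG₀a : ∀ a ∈ G₀.arcs, a.1 ∈ G₀.nodes ∧ a.2 ∈ G₀.nodes)
    (he : e = (y, x) ∨ e = (x, y)) {z : ℕ} (hz : z ∈ G.nodes) :
    LGraph.comp ⟨G.nodes ∪ G₀.nodes, insert e (G.arcs ∪ G₀.arcs)⟩ x z = G.comp x z := by
  ext b
  rw [LGraph.mem_comp, LGraph.mem_comp]
  constructor
  · rintro ⟨hbe, hr⟩
    obtain ⟨hbG, hrG⟩ := reach_glue_G hd hGa hG₀a he hz hr
    exact ⟨Finset.mem_erase.2 ⟨(Finset.mem_erase.1 hbe).1, hbG⟩, hrG⟩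
  · rintro ⟨hbe, hr⟩
    obtain ⟨hbx, hbG⟩ := Finset.mem_erase.1 hbe
    refine ⟨Finset.mem_erase.2 ⟨hbx, Finset.mem_union_left _ hbG⟩, ?_⟩
    exact rtg_mono hr (fun a c hac =>
      ⟨hac.1.mono (fun p hp => Finset.mem_insert_of_mem (Finset.mem_union_left _ hp)),
       hac.2.1, hac.2.2⟩)

theorem induce_glue_full (hd : ∀ z, z ∈ G.nodes → z ∈ G₀.nodes → False)
    (hGa : ∀ a ∈ G.arcs, a.1 ∈ G.nodes ∧ a.2 ∈ G.nodes)
    (hG₀a : ∀ a ∈ G₀.arcs, a.1 ∈ G₀.nodes ∧ a.2 ∈ G₀.nodes)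
    (he : e = (y, x) ∨ e = (x, y)) (hxG : x ∈ G.nodes) :
    LGraph.induce ⟨G.nodes ∪ G₀.nodes, insert e (G.arcs ∪ G₀.arcs)⟩ G₀.nodes = G₀ := by
  refine LGraph.ext' rfl ?_
  ext a
  simp only [LGraph.induce, Finset.mem_filter, Finset.mem_insert, Finset.mem_union]
  constructor
  · rintro ⟨rfl | hm | hm, h1, h2⟩
    · rcases he with rfl | rfl
      · exact absurd h2 (fun hmem => hd x hxG hmem)
      · exact absurd h1 (fun hmem => hd x hxG hmem)
    · exact absurd h1 (fun hmem => hd _ (hGa _ hm).1 hmem)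
    · exact hm
  · intro ha
    exact ⟨Or.inr (Or.inr ha), (hG₀a _ ha).1, (hG₀a _ ha).2⟩

theorem induce_glue_sub (hd : ∀ z, z ∈ G.nodes → z ∈ G₀.nodes → False)
    (hG₀a : ∀ a ∈ G₀.arcs, a.1 ∈ G₀.nodes ∧ a.2 ∈ G₀.nodes)
    (he : e = (y, x) ∨ e = (x, y))
    {s : Finset ℕ} (hs1 : x ∉ s) (hs2 : ∀ z ∈ s, z ∈ G.nodes) :
    LGraph.induce ⟨G.nodes ∪ G₀.nodes, insert e (G.arcs ∪ G₀.arcs)⟩ s = G.induce s := by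
  refine LGraph.ext' rfl ?_
  ext a
  simp only [LGraph.induce, Finset.mem_filter, Finset.mem_insert, Finset.mem_union]
  constructor
  · rintro ⟨rfl | hm | hm, h1, h2⟩
    · rcases he with rfl | rfl
      · exact absurd h2 hs1
      · exact absurd h1 hs1
    · exact ⟨hm, h1, h2⟩
    · exact absurd (hs2 _ h1) (fun hmem => hd _ hmem (hG₀a _ hm).1)
  · rintro ⟨hm, h1, h2⟩
    exact ⟨Or.inr (Or.inl hm), h1, h2⟩

end Glue

theorem filter_mem_add_left {Λ Λ₀ : LCtx} {s : Finset ℕ} (h : ∀ a ∈ Λ₀, (a.1 : ℕ) ∉ s) :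
    Multiset.filter (fun p => p.1 ∈ s) (Λ + Λ₀) = Multiset.filter (fun p => p.1 ∈ s) Λ := by
  rw [Multiset.filter_add, Multiset.filter_eq_nil.2 h, add_zero]

theorem filter_mem_add_right {Λ Λ₀ : LCtx} {s : Finset ℕ} (h : ∀ a ∈ Λ, (a.1 : ℕ) ∉ s)
    (h₀ : ∀ a ∈ Λ₀, (a.1 : ℕ) ∈ s) :
    Multiset.filter (fun p => p.1 ∈ s) (Λ + Λ₀) = Λ₀ := by
  rw [Multiset.filter_add, Multiset.filter_eq_nil.2 h, Multiset.filter_eq_self.2 h₀, zero_add]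

theorem filter_fst_add_left {Λ Λ₀ : LCtx} {x : ℕ} (h : ∀ a ∈ Λ₀, (a.1 : ℕ) ≠ x) :
    Multiset.filter (fun a => a.1 = x) (Λ + Λ₀) = Multiset.filter (fun a => a.1 = x) Λ := by
  rw [Multiset.filter_add, Multiset.filter_eq_nil.2 h, add_zero]

theorem filter_insert_union_pos {s t : Finset (ℕ × ℕ)} {p : ℕ × ℕ → Prop} [DecidablePred p]
    {a : ℕ × ℕ} (hpa : p a) (ht : ∀ b ∈ t, ¬ p b) :
    Finset.filter p (insert a (s ∪ t)) = insert a (Finset.filter p s) := by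
  rw [Finset.filter_insert, if_pos hpa, Finset.filter_union,
    Finset.filter_eq_empty_iff.2 ht, Finset.union_empty]

theorem filter_insert_union_neg {s t : Finset (ℕ × ℕ)} {p : ℕ × ℕ → Prop} [DecidablePred p]
    {a : ℕ × ℕ} (hpa : ¬ p a) (ht : ∀ b ∈ t, ¬ p b) :
    Finset.filter p (insert a (s ∪ t)) = Finset.filter p s := by
  rw [Finset.filter_insert, if_neg hpa, Finset.filter_union,
    Finset.filter_eq_empty_iff.2 ht, Finset.union_empty]

section GlueCtx

variable {G G₀ : LGraph} {x y : ℕ} {e : ℕ × ℕ} {Λ Θ Λ₀ Θ₀ : LCtx}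

theorem ntrIn_glue_old (hd : ∀ z, z ∈ G.nodes → z ∈ G₀.nodes → False)
    (hGa : ∀ a ∈ G.arcs, a.1 ∈ G.nodes ∧ a.2 ∈ G.nodes)
    (hG₀a : ∀ a ∈ G₀.arcs, a.1 ∈ G₀.nodes ∧ a.2 ∈ G₀.nodes)
    (he : e = (y, x) ∨ e = (x, y))
    (hlabΛ₀ : ∀ a ∈ Λ₀, (a.1 : ℕ) ∈ G₀.nodes) (hlabΘ₀ : ∀ a ∈ Θ₀, (a.1 : ℕ) ∈ G₀.nodes)
    {a : ℕ × ℕ} (ha : a.1 ∈ G.nodes) :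
    ntrIn ⟨G.nodes ∪ G₀.nodes, insert e (G.arcs ∪ G₀.arcs)⟩ (Λ + Λ₀) (Θ + Θ₀) x a =
      ntrIn G Λ Θ x a := by
  unfold ntrIn
  rw [comp_glue_old hd hGa hG₀a he ha,
    induce_glue_sub hd hG₀a he (G.not_mem_comp x a.1)
      (fun z hz => Finset.mem_of_mem_erase (G.comp_subset x a.1 hz)),
    filter_mem_add_left (fun p hp hps =>
      hd p.1 (Finset.mem_of_mem_erase (G.comp_subset x a.1 hps)) (hlabΛ₀ p hp)),
    filter_mem_add_left (fun p hp hps =>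
      hd p.1 (Finset.mem_of_mem_erase (G.comp_subset x a.1 hps)) (hlabΘ₀ p hp))]

theorem ntrOut_glue_old (hd : ∀ z, z ∈ G.nodes → z ∈ G₀.nodes → False)
    (hGa : ∀ a ∈ G.arcs, a.1 ∈ G.nodes ∧ a.2 ∈ G.nodes)
    (hG₀a : ∀ a ∈ G₀.arcs, a.1 ∈ G₀.nodes ∧ a.2 ∈ G₀.nodes)
    (he : e = (y, x) ∨ e = (x, y))
    (hlabΛ₀ : ∀ a ∈ Λ₀, (a.1 : ℕ) ∈ G₀.nodes) (hlabΘ₀ : ∀ a ∈ Θ₀, (a.1 : ℕ) ∈ G₀.nodes)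
    {a : ℕ × ℕ} (ha : a.2 ∈ G.nodes) :
    ntrOut ⟨G.nodes ∪ G₀.nodes, insert e (G.arcs ∪ G₀.arcs)⟩ (Λ + Λ₀) (Θ + Θ₀) x a =
      ntrOut G Λ Θ x a := by
  unfold ntrOut
  rw [comp_glue_old hd hGa hG₀a he ha,
    induce_glue_sub hd hG₀a he (G.not_mem_comp x a.2)
      (fun z hz => Finset.mem_of_mem_erase (G.comp_subset x a.2 hz)),
    filter_mem_add_left (fun p hp hps =>
      hd p.1 (Finset.mem_of_mem_erase (G.comp_subset x a.2 hps)) (hlabΛ₀ p hp)),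
    filter_mem_add_left (fun p hp hps =>
      hd p.1 (Finset.mem_of_mem_erase (G.comp_subset x a.2 hps)) (hlabΘ₀ p hp))]

theorem ntrIn_glue_new (hd : ∀ z, z ∈ G.nodes → z ∈ G₀.nodes → False)
    (hGa : ∀ a ∈ G.arcs, a.1 ∈ G.nodes ∧ a.2 ∈ G.nodes)
    (hG₀a : ∀ a ∈ G₀.arcs, a.1 ∈ G₀.nodes ∧ a.2 ∈ G₀.nodes)
    (hxG : x ∈ G.nodes) (hyG₀ : y ∈ G₀.nodes)
    (conn₀ : ∀ z ∈ G₀.nodes,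
      Relation.ReflTransGen (fun a b => G₀.Adj a b ∧ a ∈ G₀.nodes ∧ b ∈ G₀.nodes) y z)
    (hlabΛ : ∀ a ∈ Λ, (a.1 : ℕ) ∈ G.nodes) (hlabΘ : ∀ a ∈ Θ, (a.1 : ℕ) ∈ G.nodes)
    (hlabΛ₀ : ∀ a ∈ Λ₀, (a.1 : ℕ) ∈ G₀.nodes) (hlabΘ₀ : ∀ a ∈ Θ₀, (a.1 : ℕ) ∈ G₀.nodes) :
    ntrIn ⟨G.nodes ∪ G₀.nodes, insert (y, x) (G.arcs ∪ G₀.arcs)⟩ (Λ + Λ₀) (Θ + Θ₀) x (y, x) =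
      NForm.seq (ntr G₀ Λ₀ Θ₀ y).1 (ntr G₀ Λ₀ Θ₀ y).2 := by
  unfold ntrIn
  rw [comp_glue_new hd hGa hG₀a (Or.inl rfl) hxG hyG₀ conn₀,
    induce_glue_full hd hGa hG₀a (Or.inl rfl) hxG,
    filter_mem_add_right (fun p hp hps => hd p.1 (hlabΛ p hp) hps) hlabΛ₀,
    filter_mem_add_right (fun p hp hps => hd p.1 (hlabΘ p hp) hps) hlabΘ₀]

theorem ntrOut_glue_new (hd : ∀ z, z ∈ G.nodes → z ∈ G₀.nodes → False)
    (hGa : ∀ a ∈ G.arcs, a.1 ∈ G.nodes ∧ a.2 ∈ G.nodes)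
    (hG₀a : ∀ a ∈ G₀.arcs, a.1 ∈ G₀.nodes ∧ a.2 ∈ G₀.nodes)
    (hxG : x ∈ G.nodes) (hyG₀ : y ∈ G₀.nodes)
    (conn₀ : ∀ z ∈ G₀.nodes,
      Relation.ReflTransGen (fun a b => G₀.Adj a b ∧ a ∈ G₀.nodes ∧ b ∈ G₀.nodes) y z)
    (hlabΛ : ∀ a ∈ Λ, (a.1 : ℕ) ∈ G.nodes) (hlabΘ : ∀ a ∈ Θ, (a.1 : ℕ) ∈ G.nodes)
    (hlabΛ₀ : ∀ a ∈ Λ₀, (a.1 : ℕ) ∈ G₀.nodes) (hlabΘ₀ : ∀ a ∈ Θ₀, (a.1 : ℕ) ∈ G₀.nodes) :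
    ntrOut ⟨G.nodes ∪ G₀.nodes, insert (x, y) (G.arcs ∪ G₀.arcs)⟩ (Λ + Λ₀) (Θ + Θ₀) x (x, y) =
      NForm.seq (ntr G₀ Λ₀ Θ₀ y).1 (ntr G₀ Λ₀ Θ₀ y).2 := by
  unfold ntrOut
  rw [comp_glue_new hd hGa hG₀a (Or.inr rfl) hxG hyG₀ conn₀,
    induce_glue_full hd hGa hG₀a (Or.inr rfl) hxG,
    filter_mem_add_right (fun p hp hps => hd p.1 (hlabΛ p hp) hps) hlabΛ₀,
    filter_mem_add_right (fun p hp hps => hd p.1 (hlabΘ p hp) hps) hlabΘ₀]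

end GlueCtx

theorem labOf_ntr {Γ Δ : List NForm} {x : ℕ} {G : LGraph} {Λ Θ : LCtx}
    (h : LabOf Γ Δ x G Λ Θ) :
    CEq (ntr G Λ Θ x).1 Γ ∧ CEq (ntr G Λ Θ x).2 Δ := by
  induction h with
  | nil z =>
    have hz : z ∈ (⟨{z}, ∅⟩ : LGraph).nodes := by simp
    rw [ntr_eq hz]
    dsimp only
    simp only [Multiset.filter_zero, Multiset.toList_zero, List.map_nil, List.nil_append,
      Finset.filter_empty, Finset.toList_empty]
    exact ⟨.nil, .nil⟩
  | @antFm Γ Δ x G Λ Θ A h ih =>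
    obtain ⟨ih1, ih2⟩ := ih
    have I := labOf_inv h
    rw [ntr_eq I.root] at ih1 ih2 ⊢
    dsimp only at ih1 ih2 ⊢
    rw [filter_fst_cons, ntrIn_consL, ntrOut_consL]
    constructor
    · refine CEq.trans (CEq.of_perm ?_) (CEq.cons (NEq.fm A) ih1)
      exact ((toList_cons_perm (x, A) _).map _).append_right _
    · exact ih2
  | @sucFm Γ Δ x G Λ Θ A h ih =>
    obtain ⟨ih1, ih2⟩ := ih
    have I := labOf_inv h
    rw [ntr_eq I.root] at ih1 ih2 ⊢
    dsimp only at ih1 ih2 ⊢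
    rw [filter_fst_cons, ntrIn_consR, ntrOut_consR]
    constructor
    · exact ih1
    · refine CEq.trans (CEq.of_perm ?_) (CEq.cons (NEq.fm A) ih2)
      exact ((toList_cons_perm (x, A) _).map _).append_right _
  | @antSeq Γ Δ x G Λ Θ Γ₀ Δ₀ y G₀ Λ₀ Θ₀ h h₀ hdisj ih ih₀ =>
    obtain ⟨ih1, ih2⟩ := ih
    obtain ⟨ih01, ih02⟩ := ih₀
    have I := labOf_inv h
    have I₀ := labOf_inv h₀
    have hd : ∀ z, z ∈ G.nodes → z ∈ G₀.nodes → False := fun z h1 h2 => by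
      have := Finset.mem_inter.2 ⟨h1, h2⟩
      rw [hdisj] at this
      exact absurd this (Finset.notMem_empty z)
    have hyx : y ≠ x := fun hyx => hd x I.root (hyx ▸ I₀.root)
    have hx' : x ∈ (⟨G.nodes ∪ G₀.nodes, insert (y, x) (G.arcs ∪ G₀.arcs)⟩ : LGraph).nodes :=
      Finset.mem_union_left _ I.root
    rw [ntr_eq hx']
    rw [ntr_eq I.root] at ih1 ih2
    dsimp only at ih1 ih2 ⊢
    have f1 : Multiset.filter (fun a => a.1 = x) (Λ + Λ₀) =
        Multiset.filter (fun a => a.1 = x) Λ :=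
      filter_fst_add_left (fun a ha hax => hd x I.root (hax ▸ I₀.lab₁ a ha))
    have f2 : Multiset.filter (fun a => a.1 = x) (Θ + Θ₀) =
        Multiset.filter (fun a => a.1 = x) Θ :=
      filter_fst_add_left (fun a ha hax => hd x I.root (hax ▸ I₀.lab₂ a ha))
    have g1 : Finset.filter (fun a => a.2 = x) (insert (y, x) (G.arcs ∪ G₀.arcs)) =
        insert (y, x) (Finset.filter (fun a => a.2 = x) G.arcs) :=
      filter_insert_union_pos rfl
        (fun b hb hbx => hd x I.root (hbx ▸ (I₀.arcs_mem b hb).2))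
    have g2 : Finset.filter (fun a => a.1 = x) (insert (y, x) (G.arcs ∪ G₀.arcs)) =
        Finset.filter (fun a => a.1 = x) G.arcs :=
      filter_insert_union_neg hyx
        (fun b hb hbx => hd x I.root (hbx ▸ (I₀.arcs_mem b hb).1))
    have gfresh : (y, x) ∉ Finset.filter (fun a => a.2 = x) G.arcs := fun hm =>
      hd y (I.arcs_mem _ (Finset.mem_filter.1 hm).1).1 I₀.root
    have eold : ∀ a ∈ (Finset.filter (fun a => a.2 = x) G.arcs).toList,
        ntrIn ⟨G.nodes ∪ G₀.nodes, insert (y, x) (G.arcs ∪ G₀.arcs)⟩ (Λ + Λ₀) (Θ + Θ₀) x a =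
          ntrIn G Λ Θ x a := fun a ha =>
      ntrIn_glue_old hd I.arcs_mem I₀.arcs_mem (Or.inl rfl) I₀.lab₁ I₀.lab₂
        (I.arcs_mem a (Finset.mem_filter.1 (Finset.mem_toList.1 ha)).1).1
    have eold' : ∀ a ∈ (Finset.filter (fun a => a.1 = x) G.arcs).toList,
        ntrOut ⟨G.nodes ∪ G₀.nodes, insert (y, x) (G.arcs ∪ G₀.arcs)⟩ (Λ + Λ₀) (Θ + Θ₀) x a =
          ntrOut G Λ Θ x a := fun a ha =>
      ntrOut_glue_old hd I.arcs_mem I₀.arcs_mem (Or.inl rfl) I₀.lab₁ I₀.lab₂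
        (I.arcs_mem a (Finset.mem_filter.1 (Finset.mem_toList.1 ha)).1).2
    have enew : ntrIn ⟨G.nodes ∪ G₀.nodes, insert (y, x) (G.arcs ∪ G₀.arcs)⟩
        (Λ + Λ₀) (Θ + Θ₀) x (y, x) =
          NForm.seq (ntr G₀ Λ₀ Θ₀ y).1 (ntr G₀ Λ₀ Θ₀ y).2 :=
      ntrIn_glue_new hd I.arcs_mem I₀.arcs_mem I.root I₀.root I₀.conn
        I.lab₁ I.lab₂ I₀.lab₁ I₀.lab₂
    rw [f1, f2, g1, g2]
    constructor
    · have permIn : (List.map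
          (ntrIn ⟨G.nodes ∪ G₀.nodes, insert (y, x) (G.arcs ∪ G₀.arcs)⟩ (Λ + Λ₀) (Θ + Θ₀) x)
          (insert (y, x) (Finset.filter (fun a => a.2 = x) G.arcs)).toList).Perm
          (NForm.seq (ntr G₀ Λ₀ Θ₀ y).1 (ntr G₀ Λ₀ Θ₀ y).2 ::
            List.map (ntrIn G Λ Θ x) (Finset.filter (fun a => a.2 = x) G.arcs).toList) := by
        refine ((Finset.toList_insert gfresh).map _).trans ?_
        rw [List.map_cons, enew, List.map_congr_left eold]
      refine CEq.trans (CEq.of_perm ?_) (CEq.cons (NEq.seq ih01 ih02) ih1)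
      exact (permIn.append_left _).trans List.perm_middle
    · rw [List.map_congr_left eold']
      exact ih2
  | @sucSeq Γ Δ x G Λ Θ Γ₀ Δ₀ y G₀ Λ₀ Θ₀ h h₀ hdisj ih ih₀ =>
    obtain ⟨ih1, ih2⟩ := ih
    obtain ⟨ih01, ih02⟩ := ih₀
    have I := labOf_inv h
    have I₀ := labOf_inv h₀
    have hd : ∀ z, z ∈ G.nodes → z ∈ G₀.nodes → False := fun z h1 h2 => by
      have := Finset.mem_inter.2 ⟨h1, h2⟩
      rw [hdisj] at this
      exact absurd this (Finset.notMem_empty z)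
    have hyx : y ≠ x := fun hyx => hd x I.root (hyx ▸ I₀.root)
    have hx' : x ∈ (⟨G.nodes ∪ G₀.nodes, insert (x, y) (G.arcs ∪ G₀.arcs)⟩ : LGraph).nodes :=
      Finset.mem_union_left _ I.root
    rw [ntr_eq hx']
    rw [ntr_eq I.root] at ih1 ih2
    dsimp only at ih1 ih2 ⊢
    have f1 : Multiset.filter (fun a => a.1 = x) (Λ + Λ₀) =
        Multiset.filter (fun a => a.1 = x) Λ :=
      filter_fst_add_left (fun a ha hax => hd x I.root (hax ▸ I₀.lab₁ a ha))
    have f2 : Multiset.filter (fun a => a.1 = x) (Θ + Θ₀) =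
        Multiset.filter (fun a => a.1 = x) Θ :=
      filter_fst_add_left (fun a ha hax => hd x I.root (hax ▸ I₀.lab₂ a ha))
    have g1 : Finset.filter (fun a => a.1 = x) (insert (x, y) (G.arcs ∪ G₀.arcs)) =
        insert (x, y) (Finset.filter (fun a => a.1 = x) G.arcs) :=
      filter_insert_union_pos rfl
        (fun b hb hbx => hd x I.root (hbx ▸ (I₀.arcs_mem b hb).1))
    have g2 : Finset.filter (fun a => a.2 = x) (insert (x, y) (G.arcs ∪ G₀.arcs)) =
        Finset.filter (fun a => a.2 = x) G.arcs :=
      filter_insert_union_neg hyx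
        (fun b hb hbx => hd x I.root (hbx ▸ (I₀.arcs_mem b hb).2))
    have gfresh : (x, y) ∉ Finset.filter (fun a => a.1 = x) G.arcs := fun hm =>
      hd y (I.arcs_mem _ (Finset.mem_filter.1 hm).1).2 I₀.root
    have eold : ∀ a ∈ (Finset.filter (fun a => a.2 = x) G.arcs).toList,
        ntrIn ⟨G.nodes ∪ G₀.nodes, insert (x, y) (G.arcs ∪ G₀.arcs)⟩ (Λ + Λ₀) (Θ + Θ₀) x a =
          ntrIn G Λ Θ x a := fun a ha =>
      ntrIn_glue_old hd I.arcs_mem I₀.arcs_mem (Or.inr rfl) I₀.lab₁ I₀.lab₂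
        (I.arcs_mem a (Finset.mem_filter.1 (Finset.mem_toList.1 ha)).1).1
    have eold' : ∀ a ∈ (Finset.filter (fun a => a.1 = x) G.arcs).toList,
        ntrOut ⟨G.nodes ∪ G₀.nodes, insert (x, y) (G.arcs ∪ G₀.arcs)⟩ (Λ + Λ₀) (Θ + Θ₀) x a =
          ntrOut G Λ Θ x a := fun a ha =>
      ntrOut_glue_old hd I.arcs_mem I₀.arcs_mem (Or.inr rfl) I₀.lab₁ I₀.lab₂
        (I.arcs_mem a (Finset.mem_filter.1 (Finset.mem_toList.1 ha)).1).2
    have enew : ntrOut ⟨G.nodes ∪ G₀.nodes, insert (x, y) (G.arcs ∪ G₀.arcs)⟩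
        (Λ + Λ₀) (Θ + Θ₀) x (x, y) =
          NForm.seq (ntr G₀ Λ₀ Θ₀ y).1 (ntr G₀ Λ₀ Θ₀ y).2 :=
      ntrOut_glue_new hd I.arcs_mem I₀.arcs_mem I.root I₀.root I₀.conn
        I.lab₁ I.lab₂ I₀.lab₁ I₀.lab₂
    rw [f1, f2, g1, g2]
    constructor
    · rw [List.map_congr_left eold]
      exact ih1
    · have permOut : (List.map
          (ntrOut ⟨G.nodes ∪ G₀.nodes, insert (x, y) (G.arcs ∪ G₀.arcs)⟩ (Λ + Λ₀) (Θ + Θ₀) x)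
          (insert (x, y) (Finset.filter (fun a => a.1 = x) G.arcs)).toList).Perm
          (NForm.seq (ntr G₀ Λ₀ Θ₀ y).1 (ntr G₀ Λ₀ Θ₀ y).2 ::
            List.map (ntrOut G Λ Θ x) (Finset.filter (fun a => a.1 = x) G.arcs).toList) := by
        refine ((Finset.toList_insert gfresh).map _).trans ?_
        rw [List.map_cons, enew, List.map_congr_left eold']
      refine CEq.trans (CEq.of_perm ?_) (CEq.cons (NEq.seq ih01 ih02) ih2)
      exact (permOut.append_left _).trans List.perm_middle

theorem labOf_exists : ∀ (Γ Δ : List NForm) (x N : ℕ), x < N →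
    ∃ G Λ Θ M, N ≤ M ∧ G.nodes ⊆ insert x (Finset.Ico N M) ∧ LabOf Γ Δ x G Λ Θ
  | [], [], x, N, _ =>
    ⟨⟨{x}, ∅⟩, 0, 0, N, le_refl N, by simp, .nil x⟩
  | .fm A :: Γ, Δ, x, N, h => by
    obtain ⟨G, Λ, Θ, M, h1, h2, h3⟩ := labOf_exists Γ Δ x N h
    exact ⟨G, _, _, M, h1, h2, .antFm A h3⟩
  | .seq Γ₀ Δ₀ :: Γ, Δ, x, N, h => by
    obtain ⟨G, Λ, Θ, M, h1, h2, h3⟩ := labOf_exists Γ Δ x N h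
    obtain ⟨G₀, Λ₀, Θ₀, M₀, h1₀, h2₀, h3₀⟩ := labOf_exists Γ₀ Δ₀ M (M + 1) (Nat.lt_succ_self M)
    refine ⟨_, _, _, M₀, by omega, ?_, .antSeq h3 h3₀ ?_⟩
    · intro z hz
      rcases Finset.mem_union.1 hz with hz | hz
      · have := h2 hz
        simp only [Finset.mem_insert, Finset.mem_Ico] at this ⊢
        omega
      · have := h2₀ hz
        simp only [Finset.mem_insert, Finset.mem_Ico] at this ⊢
        omega
    · rw [Finset.eq_empty_iff_forall_notMem]
      intro z hz
      rw [Finset.mem_inter] at hz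
      have u1 := h2 hz.1
      have u2 := h2₀ hz.2
      simp only [Finset.mem_insert, Finset.mem_Ico] at u1 u2
      omega
  | [], .fm A :: Δ, x, N, h => by
    obtain ⟨G, Λ, Θ, M, h1, h2, h3⟩ := labOf_exists [] Δ x N h
    exact ⟨G, _, _, M, h1, h2, .sucFm A h3⟩
  | [], .seq Γ₀ Δ₀ :: Δ, x, N, h => by
    obtain ⟨G, Λ, Θ, M, h1, h2, h3⟩ := labOf_exists [] Δ x N h
    obtain ⟨G₀, Λ₀, Θ₀, M₀, h1₀, h2₀, h3₀⟩ := labOf_exists Γ₀ Δ₀ M (M + 1) (Nat.lt_succ_self M)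
    refine ⟨_, _, _, M₀, by omega, ?_, .sucSeq h3 h3₀ ?_⟩
    · intro z hz
      rcases Finset.mem_union.1 hz with hz | hz
      · have := h2 hz
        simp only [Finset.mem_insert, Finset.mem_Ico] at this ⊢
        omega
      · have := h2₀ hz
        simp only [Finset.mem_insert, Finset.mem_Ico] at this ⊢
        omega
    · rw [Finset.eq_empty_iff_forall_notMem]
      intro z hz
      rw [Finset.mem_inter] at hz
      have u1 := h2 hz.1
      have u2 := h2₀ hz.2
      simp only [Finset.mem_insert, Finset.mem_Ico] at u1 u2
      omega
termination_by Γ Δ _ _ _ => sizeOf Γ + sizeOf Δ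

/-- the nested-to-labelled translation is inverted by the
labelled-to-nested translation: n(ℓ(Γ ⊢ Δ; x); x) = Γ ⊢ Δ (as multisets) -/
theorem ntr_labOf_roundtrip (Γ Δ : List NForm) (x : ℕ) :
    (∃ G Λ Θ, LabOf Γ Δ x G Λ Θ) ∧
      ∀ G Λ Θ, LabOf Γ Δ x G Λ Θ →
        CEq (ntr G Λ Θ x).1 Γ ∧ CEq (ntr G Λ Θ x).2 Δ := by
  refine ⟨?_, fun G Λ Θ h => labOf_ntr h⟩
  obtain ⟨G, Λ, Θ, M, -, -, h⟩ := labOf_exists Γ Δ x (x + 1) (Nat.lt_succ_self x)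
  exact ⟨G, Λ, Θ, h⟩
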